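/- arXiv:1701.05138 — 3 statements merged into one kernel-verified Lean document; each statement's English description precedes it below -/
import Mathlib

section
/- Over finite reflexive transitive Kripke models, the formula ◇(p → □◇p) is valid at every world. -/
def box {W : Type*} (R : W → W → Prop) (A : W → Prop) : W → Prop :=
  fun w => ∀ v, R w v → A v

def dia {W : Type*} (R : W → W → Prop) (A : W → Prop) : W → Prop :=
  fun w => ∃ v, R w v ∧ A v

theorem stmt_15 {W : Type*} [Finite W] (R : W → W → Prop)
    (hrefl : Reflexive R) (htrans : Transitive R)
    (p : W → Prop) (w : W) :
    dia R (fun v => p v → box R (dia R p) v) w := by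
  by_cases h : ∃ v, R w v ∧ ¬ p v
  · obtain ⟨v, hv, hnp⟩ := h
    exact ⟨v, hv, fun hp => absurd hp hnp⟩
  · push_neg at h
    exact ⟨w, hrefl w, fun _ u hu => ⟨u, hrefl u, h u hu⟩⟩
end

section
/- Over finite reflexive transitive Kripke models, the formula ◇(◇p → □◇p) is valid at every world, and moreover (◇p → □◇p) ↔ □(◇p → □◇p) is valid at every world. -/
theorem stmt_16 {W : Type*} [Finite W] (R : W → W → Prop)
    (hrefl : Reflexive R) (htrans : Transitive R)
    (p : W → Prop) (w : W) :
    dia R (fun v => dia R p v → box R (dia R p) v) w ∧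
      ((dia R p w → box R (dia R p) w) ↔
        box R (fun v => dia R p v → box R (dia R p) v) w) := by
  have key : dia R (fun v => dia R p v → box R (dia R p) v) w := by
    by_cases h : box R (dia R p) w
    · exact ⟨w, hrefl w, fun _ => h⟩
    · simp only [box] at h
      push_neg at h
      obtain ⟨u, hu, hnp⟩ := h
      exact ⟨u, hu, fun hd => absurd hd hnp⟩
  refine ⟨key, ⟨?_, fun h => h w (hrefl w)⟩⟩
  intro h v hv hdv u hu
  have hdw : dia R p w := by
    obtain ⟨x, hx, hpx⟩ := hdv
    exact ⟨x, htrans hv hx, hpx⟩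
  exact h hdw u (htrans hv hu)
end

section
/- Let A and B be modal formulas, and suppose: (i) there exist reflexive transitive Kripke models M₁ with M₁ ⊭ A and M₂ with M₂ ⊭ B; (ii) A ↔ □A and B ↔ □B are valid in every reflexive transitive rooted Kripke model. Then A ∨ B is not valid in all reflexive transitive Kripke models: namely, in the model M obtained from the disjoint union of M₁ and M₂ by adding a new reflexive root 0 below all worlds of both, the formula A ∨ B fails at some world. More precisely, if M, 0 ⊨ A ∨ B, then since A ↔ □A holds at 0, one derives M₁ ⊨ A or M₂ ⊨ B at their respective worlds, a contradiction with a suitable failing world; hence A ∨ B fails somewhere in M. -/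
inductive Formula where
  | atom : ℕ → Formula
  | bot  : Formula
  | imp  : Formula → Formula → Formula
  | and  : Formula → Formula → Formula
  | or   : Formula → Formula → Formula
  | neg  : Formula → Formula
  | box  : Formula → Formula
  | dia  : Formula → Formula

def Sat {W : Type*} (R : W → W → Prop) (V : ℕ → W → Prop) : W → Formula → Prop
  | w, .atom n  => V n w
  | _, .bot     => False
  | w, .imp a b => Sat R V w a → Sat R V w b
  | w, .and a b => Sat R V w a ∧ Sat R V w b
  | w, .or a b  => Sat R V w a ∨ Sat R V w b
  | w, .neg a   => ¬ Sat R V w a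
  | w, .box a   => ∀ v, R w v → Sat R V v a
  | w, .dia a   => ∃ v, R w v ∧ Sat R V v a

/-- The accessibility relation of the model `(M₁ + M₂)'`: a fresh root `none`
    below the disjoint union of the two models. -/
def combR {W₁ W₂ : Type} (R₁ : W₁ → W₁ → Prop) (R₂ : W₂ → W₂ → Prop) :
    Option (W₁ ⊕ W₂) → Option (W₁ ⊕ W₂) → Prop
  | none, _ => True
  | some (.inl a), some (.inl b) => R₁ a b
  | some (.inr a), some (.inr b) => R₂ a b
  | _, _ => False

/-- The valuation of the combined model: all variables false at the root. -/
def combV {W₁ W₂ : Type} (V₁ : ℕ → W₁ → Prop) (V₂ : ℕ → W₂ → Prop) :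
    ℕ → Option (W₁ ⊕ W₂) → Prop
  | _, none => False
  | n, some (.inl a) => V₁ n a
  | n, some (.inr a) => V₂ n a


lemma satL {W₁ W₂ : Type} (R₁ : W₁ → W₁ → Prop) (R₂ : W₂ → W₂ → Prop)
    (V₁ : ℕ → W₁ → Prop) (V₂ : ℕ → W₂ → Prop) :
    ∀ (C : Formula) (a : W₁),
      Sat (combR R₁ R₂) (combV V₁ V₂) (some (Sum.inl a)) C ↔ Sat R₁ V₁ a C := by
  intro C
  induction C with
  | atom n => intro a; rfl
  | bot => intro a; rfl
  | imp p q ihp ihq => intro a; simp only [Sat, ihp, ihq]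
  | and p q ihp ihq => intro a; simp only [Sat, ihp, ihq]
  | or p q ihp ihq => intro a; simp only [Sat, ihp, ihq]
  | neg p ihp => intro a; simp only [Sat, ihp]
  | box p ihp =>
    intro a
    constructor
    · intro h b hb
      exact (ihp b).mp (h (some (Sum.inl b)) hb)
    · intro h v hv
      match v, hv with
      | some (Sum.inl b), hv => exact (ihp b).mpr (h b hv)
  | dia p ihp =>
    intro a
    constructor
    · rintro ⟨v, hv, hp⟩
      match v, hv, hp with
      | some (Sum.inl b), hv, hp => exact ⟨b, hv, (ihp b).mp hp⟩
    · rintro ⟨b, hb, hp⟩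
      exact ⟨some (Sum.inl b), hb, (ihp b).mpr hp⟩

lemma satR {W₁ W₂ : Type} (R₁ : W₁ → W₁ → Prop) (R₂ : W₂ → W₂ → Prop)
    (V₁ : ℕ → W₁ → Prop) (V₂ : ℕ → W₂ → Prop) :
    ∀ (C : Formula) (a : W₂),
      Sat (combR R₁ R₂) (combV V₁ V₂) (some (Sum.inr a)) C ↔ Sat R₂ V₂ a C := by
  intro C
  induction C with
  | atom n => intro a; rfl
  | bot => intro a; rfl
  | imp p q ihp ihq => intro a; simp only [Sat, ihp, ihq]
  | and p q ihp ihq => intro a; simp only [Sat, ihp, ihq]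
  | or p q ihp ihq => intro a; simp only [Sat, ihp, ihq]
  | neg p ihp => intro a; simp only [Sat, ihp]
  | box p ihp =>
    intro a
    constructor
    · intro h b hb
      exact (ihp b).mp (h (some (Sum.inr b)) hb)
    · intro h v hv
      match v, hv with
      | some (Sum.inr b), hv => exact (ihp b).mpr (h b hv)
  | dia p ihp =>
    intro a
    constructor
    · rintro ⟨v, hv, hp⟩
      match v, hv, hp with
      | some (Sum.inr b), hv, hp => exact ⟨b, hv, (ihp b).mp hp⟩
    · rintro ⟨b, hb, hp⟩
      exact ⟨some (Sum.inr b), hb, (ihp b).mpr hp⟩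

theorem stmt_19 {W₁ W₂ : Type}
    (R₁ : W₁ → W₁ → Prop) (R₂ : W₂ → W₂ → Prop)
    (V₁ : ℕ → W₁ → Prop) (V₂ : ℕ → W₂ → Prop)
    (h1refl : Reflexive R₁) (h1trans : Transitive R₁)
    (h2refl : Reflexive R₂) (h2trans : Transitive R₂)
    (A B : Formula)
    (x₁ : W₁) (hA : ¬ Sat R₁ V₁ x₁ A)
    (x₂ : W₂) (hB : ¬ Sat R₂ V₂ x₂ B)
    (hAfix : ∀ (W : Type) (R : W → W → Prop) (V : ℕ → W → Prop),
      Reflexive R → Transitive R → (∃ r, ∀ w, R r w) →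
      ∀ w, Sat R V w A ↔ Sat R V w (Formula.box A))
    (hBfix : ∀ (W : Type) (R : W → W → Prop) (V : ℕ → W → Prop),
      Reflexive R → Transitive R → (∃ r, ∀ w, R r w) →
      ∀ w, Sat R V w B ↔ Sat R V w (Formula.box B)) :
    ∃ w : Option (W₁ ⊕ W₂),
      ¬ Sat (combR R₁ R₂) (combV V₁ V₂) w (Formula.or A B) := by
  have crefl : Reflexive (combR R₁ R₂) := by
    intro w
    match w with
    | none => trivial
    | some (Sum.inl a) => exact h1refl a
    | some (Sum.inr a) => exact h2refl a
  have ctrans : Transitive (combR R₁ R₂) := by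
    intro u v w huv hvw
    match u, v, w, huv, hvw with
    | none, _, _, _, _ => trivial
    | some (Sum.inl a), some (Sum.inl b), some (Sum.inl c), huv, hvw =>
        exact h1trans huv hvw
    | some (Sum.inr a), some (Sum.inr b), some (Sum.inr c), huv, hvw =>
        exact h2trans huv hvw
  have croot : ∃ r : Option (W₁ ⊕ W₂), ∀ w, combR R₁ R₂ r w := ⟨none, fun _ => trivial⟩
  refine ⟨none, fun h => ?_⟩
  rcases h with h | h
  · have := (hAfix _ (combR R₁ R₂) (combV V₁ V₂) crefl ctrans croot none).mp h
    exact hA ((satL R₁ R₂ V₁ V₂ A x₁).mp (this (some (Sum.inl x₁)) trivial))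
  · have := (hBfix _ (combR R₁ R₂) (combV V₁ V₂) crefl ctrans croot none).mp h
    exact hB ((satR R₁ R₂ V₁ V₂ B x₂).mp (this (some (Sum.inr x₂)) trivial))
end
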